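/- Let R = R₀ ⊕ R₁ be a Z₂-graded commutative ring. Then the homogeneous dimension of R equals the Krull dimension of R₀: hdim R = dim R₀. -/

import Mathlib

/-- A `ℤ/2ℤ`-grading on a commutative ring `R`: additive subgroups `R0`, `R1` with
`R = R0 ⊕ R1` (internal direct sum) and `Rᵢ · Rⱼ ⊆ R_{i+j}`. -/
structure Z2Grading (R : Type*) [CommRing R] where
  R0 : AddSubgroup R
  R1 : AddSubgroup R
  one_mem : (1 : R) ∈ R0
  mul_mem_00 : ∀ {a b : R}, a ∈ R0 → b ∈ R0 → a * b ∈ R0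
  mul_mem_01 : ∀ {a b : R}, a ∈ R0 → b ∈ R1 → a * b ∈ R1
  mul_mem_11 : ∀ {a b : R}, a ∈ R1 → b ∈ R1 → a * b ∈ R0
  sup_eq_top : R0 ⊔ R1 = ⊤
  inf_eq_bot : R0 ⊓ R1 = ⊥

/-- The sum `S + T` of two subsets of `R`. -/
def setSum {R : Type*} [CommRing R] (S T : Set R) : Set R :=
  {z : R | ∃ a ∈ S, ∃ b ∈ T, z = a + b}

/-- The additive subgroup of `R` generated by the pairwise products of `S` and `T`
(i.e. the product `S·T` of an ideal/submodule pair). -/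
def mulSet {R : Type*} [CommRing R] (S T : Set R) : AddSubgroup R :=
  AddSubgroup.closure {x : R | ∃ a ∈ S, ∃ b ∈ T, x = a * b}

namespace Z2Grading

variable {R : Type*} [CommRing R] (G : Z2Grading R)

/-- The set of homogeneous elements of `R`, namely `R₀ ∪ R₁`. -/
def homogeneous : Set R := ↑G.R0 ∪ ↑G.R1

/-- `R₁²`, the ideal of `R₀` generated by the products of two elements of `R₁`. -/
def sq : AddSubgroup R := mulSet (↑G.R1) (↑G.R1)

/-- `R₁³ = R₁² · R₁`, an `R₀`-submodule of `R₁`. -/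
def cube : AddSubgroup R := mulSet (↑G.sq) (↑G.R1)

/-- `I` is an ideal of the subring `R₀` (viewed inside `R`). -/
def IsIdeal0 (I : AddSubgroup R) : Prop :=
  (I : Set R) ⊆ ↑G.R0 ∧ ∀ a ∈ G.R0, ∀ x ∈ I, a * x ∈ I

/-- `N` is an `R₀`-submodule of `R₁` (viewed inside `R`). -/
def IsSubmodule1 (N : AddSubgroup R) : Prop :=
  (N : Set R) ⊆ ↑G.R1 ∧ ∀ a ∈ G.R0, ∀ x ∈ N, a * x ∈ N

/-- The residual `(N :_{R₀} R₁) = {a ∈ R₀ : a·R₁ ⊆ N}`. -/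
def residual (N : AddSubgroup R) : AddSubgroup R where
  carrier := {a : R | a ∈ G.R0 ∧ ∀ r ∈ G.R1, a * r ∈ N}
  zero_mem' := ⟨G.R0.zero_mem, fun r _ => by simpa using N.zero_mem⟩
  add_mem' := by
    rintro a b ⟨ha0, ha⟩ ⟨hb0, hb⟩
    exact ⟨G.R0.add_mem ha0 hb0, fun r hr => by
      rw [add_mul]; exact N.add_mem (ha r hr) (hb r hr)⟩
  neg_mem' := by
    rintro a ⟨ha0, ha⟩
    exact ⟨G.R0.neg_mem ha0, fun r hr => by
      rw [neg_mul]; exact N.neg_mem (ha r hr)⟩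

/-- `J` is a `ℤ₂`-graded ideal of `R`: the homogeneous components of each of its
elements again belong to `J`, i.e. `J = (J ∩ R₀) ⊕ (J ∩ R₁)`. -/
def IsGradedIdeal (J : Ideal R) : Prop :=
  ∀ x ∈ J, ∃ a b : R, a ∈ G.R0 ∧ b ∈ G.R1 ∧ a ∈ J ∧ b ∈ J ∧ x = a + b

/-- `J` is a `ℤ₂`-graded prime ideal of `R`. -/
def IsGradedPrime (J : Ideal R) : Prop :=
  G.IsGradedIdeal J ∧ J ≠ ⊤ ∧
    ∀ r ∈ G.homogeneous, ∀ s ∈ G.homogeneous, r * s ∈ J → r ∈ J ∨ s ∈ J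

/-- `J` is a `ℤ₂`-graded maximal ideal of `R`. -/
def IsGradedMaximal (J : Ideal R) : Prop :=
  G.IsGradedIdeal J ∧ J ≠ ⊤ ∧
    ∀ J' : Ideal R, G.IsGradedIdeal J' → J ≤ J' → J' = J ∨ J' = ⊤

/-- `p` is a prime ideal of the subring `R₀`. -/
def IsPrime0 (p : AddSubgroup R) : Prop :=
  G.IsIdeal0 p ∧ (p : Set R) ≠ ↑G.R0 ∧
    ∀ a ∈ G.R0, ∀ b ∈ G.R0, a * b ∈ p → a ∈ p ∨ b ∈ p

/-- `p` is a maximal ideal of the subring `R₀`. -/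
def IsMaximal0 (p : AddSubgroup R) : Prop :=
  G.IsIdeal0 p ∧ (p : Set R) ≠ ↑G.R0 ∧
    ∀ I : AddSubgroup R, G.IsIdeal0 I → p ≤ I → (I : Set R) = ↑p ∨ (I : Set R) = ↑G.R0

/-- `N` is a prime `R₀`-submodule of `R₁`. -/
def IsPrimeSubmodule1 (N : AddSubgroup R) : Prop :=
  G.IsSubmodule1 N ∧ (N : Set R) ≠ ↑G.R1 ∧
    ∀ a ∈ G.R0, ∀ m ∈ G.R1, a * m ∈ N → a ∈ G.residual N ∨ m ∈ N

/-- `N` is a maximal (proper) `R₀`-submodule of `R₁`. -/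
def IsMaximalSubmodule1 (N : AddSubgroup R) : Prop :=
  G.IsSubmodule1 N ∧ (N : Set R) ≠ ↑G.R1 ∧
    ∀ N' : AddSubgroup R, G.IsSubmodule1 N' → N ≤ N' →
      (N' : Set R) = ↑N ∨ (N' : Set R) = ↑G.R1

/-- `R` is a `ℤ₂`-graded integral domain. -/
def IsGradedDomain : Prop :=
  (1 : R) ≠ 0 ∧
    ∀ r ∈ G.homogeneous, ∀ s ∈ G.homogeneous, r * s = 0 → r = 0 ∨ s = 0

/-- `R` is a `ℤ₂`-graded field. -/
def IsGradedField : Prop :=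
  (1 : R) ≠ 0 ∧ ∀ r ∈ G.homogeneous, r ≠ 0 → IsUnit r

/-- `R₀` as a subring of `R`. -/
def toSubring : Subring R where
  carrier := ↑G.R0
  one_mem' := G.one_mem
  mul_mem' := fun ha hb => G.mul_mem_00 ha hb
  zero_mem' := G.R0.zero_mem
  add_mem' := fun ha hb => G.R0.add_mem ha hb
  neg_mem' := fun ha => G.R0.neg_mem ha

/-- The Zariski topology on the homogeneous spectrum `Z₂Spec R`: closed sets are the
`V(I) = {P : I ⊆ P}` for `ℤ₂`-graded ideals `I`. -/
def gradedZariski : TopologicalSpace {Q : Ideal R // G.IsGradedPrime Q} :=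
  TopologicalSpace.generateFrom
    {U : Set {Q : Ideal R // G.IsGradedPrime Q} |
      ∃ I : Ideal R, G.IsGradedIdeal I ∧ U = {P | ¬ I ≤ P.1}}

end Z2Grading

/-! For a prime `p` of `R₀`, the graded primes of `R` contracting to `p` are pinned down by
their homogeneous elements: a homogeneous `x` lies in such a prime exactly when every even
element of `x · (R₀ ∪ R₁)` lies in `p`. The graded ideal `p ⊕ (p :_{R₁} R₁)` satisfies this
criterion, which makes it a graded prime over `p`, so contraction `Q ↦ Q ∩ R₀` is surjective.
Contraction also reflects inclusions: an odd `x ∈ Q` has `x² ∈ Q ∩ R₀`, so `x` lies in every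
graded prime containing `Q ∩ R₀`. Hence contraction is an order isomorphism between the graded
primes of `R` and `Spec R₀`. -/

namespace Z2Grading

variable {R : Type*} [CommRing R] (G : Z2Grading R)

lemma exists_add_eq (r : R) : ∃ a ∈ G.R0, ∃ b ∈ G.R1, a + b = r :=
  AddSubgroup.mem_sup.mp (G.sup_eq_top ▸ AddSubgroup.mem_top r)

variable {G}

lemma eq_zero_of_mem_R0_of_mem_R1 {x : R} (h0 : x ∈ G.R0) (h1 : x ∈ G.R1) : x = 0 := by
  have h : x ∈ G.R0 ⊓ G.R1 := ⟨h0, h1⟩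
  rwa [G.inf_eq_bot] at h

lemma eq_zero_of_add_mem_R0 {a b : R} (ha : a ∈ G.R0) (hb : b ∈ G.R1) (h : a + b ∈ G.R0) :
    b = 0 :=
  eq_zero_of_mem_R0_of_mem_R1 (by simpa using G.R0.sub_mem h ha) hb

lemma eq_zero_of_add_mem_R1 {a b : R} (ha : a ∈ G.R0) (hb : b ∈ G.R1) (h : a + b ∈ G.R1) :
    a = 0 :=
  eq_zero_of_mem_R0_of_mem_R1 ha (by simpa using G.R1.sub_mem h hb)

lemma mul_mem_homogeneous {r s : R} (hr : r ∈ G.homogeneous) (hs : s ∈ G.homogeneous) :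
    r * s ∈ G.homogeneous := by
  rcases hr with hr | hr <;> rcases hs with hs | hs
  · exact Or.inl (G.mul_mem_00 hr hs)
  · exact Or.inr (G.mul_mem_01 hr hs)
  · exact Or.inr (mul_comm r s ▸ G.mul_mem_01 hs hr)
  · exact Or.inl (G.mul_mem_11 hr hs)

variable (G)

def liftIdeal (p : Ideal G.toSubring) : AddSubgroup R where
  carrier := {x | ∃ h : x ∈ G.R0, (⟨x, h⟩ : G.toSubring) ∈ p}
  zero_mem' := ⟨G.R0.zero_mem, p.zero_mem⟩
  add_mem' := fun ⟨ha, hpa⟩ ⟨hb, hpb⟩ => ⟨G.R0.add_mem ha hb, p.add_mem hpa hpb⟩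
  neg_mem' := fun ⟨ha, hpa⟩ => ⟨G.R0.neg_mem ha, p.neg_mem hpa⟩

/-- The residual `(p :_{R₁} R₁)`. -/
def oddResidual (p : Ideal G.toSubring) : AddSubgroup R where
  carrier := {m | m ∈ G.R1 ∧ ∀ t ∈ G.R1, m * t ∈ G.liftIdeal p}
  zero_mem' := ⟨G.R1.zero_mem, fun t _ => by
    rw [zero_mul]; exact (G.liftIdeal p).zero_mem⟩
  add_mem' := fun ⟨ha, hpa⟩ ⟨hb, hpb⟩ => ⟨G.R1.add_mem ha hb, fun t ht => by
    simpa only [add_mul] using (G.liftIdeal p).add_mem (hpa t ht) (hpb t ht)⟩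
  neg_mem' := fun ⟨ha, hpa⟩ => ⟨G.R1.neg_mem ha, fun t ht => by
    simpa only [neg_mul] using (G.liftIdeal p).neg_mem (hpa t ht)⟩

variable {G} {p : Ideal G.toSubring}

lemma mul_mem_liftIdeal {a x : R} (ha : a ∈ G.R0) (hx : x ∈ G.liftIdeal p) :
    a * x ∈ G.liftIdeal p :=
  ⟨G.mul_mem_00 ha hx.1, p.mul_mem_left (⟨a, ha⟩ : G.toSubring) hx.2⟩

lemma mem_or_mem_of_mul_mem_liftIdeal [p.IsPrime] {a b : R} (ha : a ∈ G.R0) (hb : b ∈ G.R0)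
    (hab : a * b ∈ G.liftIdeal p) : a ∈ G.liftIdeal p ∨ b ∈ G.liftIdeal p :=
  (Ideal.IsPrime.mem_or_mem ‹_› (x := (⟨a, ha⟩ : G.toSubring)) (y := ⟨b, hb⟩) hab.2).imp
    (fun h => ⟨ha, h⟩) (fun h => ⟨hb, h⟩)

lemma mul_mem_oddResidual {a m : R} (ha : a ∈ G.R0) (hm : m ∈ G.oddResidual p) :
    a * m ∈ G.oddResidual p :=
  ⟨G.mul_mem_01 ha hm.1, fun t ht => mul_assoc a m t ▸ mul_mem_liftIdeal ha (hm.2 t ht)⟩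

lemma mul_mem_oddResidual_of_mem_liftIdeal {t a : R} (ht : t ∈ G.R1) (ha : a ∈ G.liftIdeal p) :
    t * a ∈ G.oddResidual p := by
  refine ⟨mul_comm a t ▸ G.mul_mem_01 ha.1 ht, fun u hu => ?_⟩
  rw [mul_right_comm]
  exact mul_mem_liftIdeal (G.mul_mem_11 ht hu) ha

lemma mul_mem_liftIdeal_of_mem_oddResidual {t m : R} (ht : t ∈ G.R1)
    (hm : m ∈ G.oddResidual p) : t * m ∈ G.liftIdeal p :=
  mul_comm m t ▸ hm.2 t ht

variable (G p)

def gradedExtension : Ideal R where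
  toAddSubmonoid := (G.liftIdeal p ⊔ G.oddResidual p).toAddSubmonoid
  smul_mem' r x hx := by
    obtain ⟨a, ha, b, hb, rfl⟩ := AddSubgroup.mem_sup.mp hx
    obtain ⟨r₀, hr₀, r₁, hr₁, rfl⟩ := G.exists_add_eq r
    have e : (r₀ + r₁) • (a + b) = r₀ * a + r₁ * b + (r₀ * b + r₁ * a) := by
      rw [smul_eq_mul]; ring
    rw [e]
    exact AddSubgroup.add_mem _
      (AddSubgroup.mem_sup_left (AddSubgroup.add_mem _ (mul_mem_liftIdeal hr₀ ha)
        (mul_mem_liftIdeal_of_mem_oddResidual hr₁ hb)))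
      (AddSubgroup.mem_sup_right (AddSubgroup.add_mem _ (mul_mem_oddResidual hr₀ hb)
        (mul_mem_oddResidual_of_mem_liftIdeal hr₁ ha)))

variable {G p}

lemma mem_gradedExtension_iff_of_mem_R0 {x : R} (hx : x ∈ G.R0) :
    x ∈ G.gradedExtension p ↔ x ∈ G.liftIdeal p := by
  refine ⟨fun h => ?_, fun h => AddSubgroup.mem_sup_left h⟩
  obtain ⟨a, ha, b, hb, rfl⟩ := AddSubgroup.mem_sup.mp h
  rwa [eq_zero_of_add_mem_R0 ha.1 hb.1 hx, add_zero]

lemma mem_gradedExtension_iff_of_mem_R1 {x : R} (hx : x ∈ G.R1) :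
    x ∈ G.gradedExtension p ↔ x ∈ G.oddResidual p := by
  refine ⟨fun h => ?_, fun h => AddSubgroup.mem_sup_right h⟩
  obtain ⟨a, ha, b, hb, rfl⟩ := AddSubgroup.mem_sup.mp h
  rwa [eq_zero_of_add_mem_R1 ha.1 hb.1 hx, zero_add]

lemma mem_gradedExtension_iff_of_mem_homogeneous {x : R} (hx : x ∈ G.homogeneous) :
    x ∈ G.gradedExtension p ↔
      ∀ h ∈ G.homogeneous, x * h ∈ G.R0 → x * h ∈ G.liftIdeal p := by
  rcases hx with hx | hx
  · rw [mem_gradedExtension_iff_of_mem_R0 hx]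
    refine ⟨fun hxp h hh hxh => ?_, fun H => by simpa using H 1 (Or.inl G.one_mem) (by simpa)⟩
    rcases hh with hh | hh
    · exact mul_comm h x ▸ mul_mem_liftIdeal hh hxp
    · rw [eq_zero_of_mem_R0_of_mem_R1 hxh (G.mul_mem_01 hx hh)]
      exact (G.liftIdeal p).zero_mem
  · rw [mem_gradedExtension_iff_of_mem_R1 hx]
    refine ⟨fun hxp h hh hxh => ?_,
      fun H => ⟨hx, fun t ht => H t (Or.inr ht) (G.mul_mem_11 hx ht)⟩⟩
    rcases hh with hh | hh
    · rw [eq_zero_of_mem_R0_of_mem_R1 hxh (mul_comm h x ▸ G.mul_mem_01 hh hx)]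
      exact (G.liftIdeal p).zero_mem
    · exact hxp.2 h hh

lemma isGradedIdeal_gradedExtension : G.IsGradedIdeal (G.gradedExtension p) := by
  intro x hx
  obtain ⟨a, ha, b, hb, rfl⟩ := AddSubgroup.mem_sup.mp hx
  exact ⟨a, b, ha.1, hb.1, AddSubgroup.mem_sup_left ha, AddSubgroup.mem_sup_right hb, rfl⟩

lemma isGradedPrime_gradedExtension [p.IsPrime] : G.IsGradedPrime (G.gradedExtension p) := by
  refine ⟨isGradedIdeal_gradedExtension, fun htop => ?_, fun r hr s hs hrs => ?_⟩
  · have h1 := (mem_gradedExtension_iff_of_mem_R0 G.one_mem).mp (htop ▸ Submodule.mem_top)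
    exact Ideal.IsPrime.ne_top ‹_› ((Ideal.eq_top_iff_one p).mpr h1.2)
  · by_contra! hn
    simp only [mem_gradedExtension_iff_of_mem_homogeneous hr,
      mem_gradedExtension_iff_of_mem_homogeneous hs, not_forall, exists_prop] at hn
    obtain ⟨⟨h, hh, hrh, hrh'⟩, ⟨k, hk, hsk, hsk'⟩⟩ := hn
    have hmul : (r * s) * (h * k) = (r * h) * (s * k) := by ring
    have key := (mem_gradedExtension_iff_of_mem_homogeneous (mul_mem_homogeneous hr hs)).mp hrs
      (h * k) (mul_mem_homogeneous hh hk) (hmul ▸ G.mul_mem_00 hrh hsk)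
    rw [hmul] at key
    exact (mem_or_mem_of_mul_mem_liftIdeal hrh hsk key).elim hrh' hsk'

lemma comap_gradedExtension : (G.gradedExtension p).comap G.toSubring.subtype = p := by
  ext x
  exact (mem_gradedExtension_iff_of_mem_R0 x.2).trans ⟨fun ⟨_, h⟩ => h, fun h => ⟨x.2, h⟩⟩

lemma isPrime_comap_of_isGradedPrime {Q : Ideal R} (hQ : G.IsGradedPrime Q) :
    (Q.comap G.toSubring.subtype).IsPrime where
  ne_top' h := hQ.2.1 <| (Ideal.eq_top_iff_one Q).mpr <|
    (Ideal.eq_top_iff_one (Q.comap G.toSubring.subtype)).mp h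
  mem_or_mem' {a b} hab := hQ.2.2 a (Or.inl a.2) b (Or.inl b.2) hab

lemma le_of_comap_le_comap {Q Q' : Ideal R} (hQ : G.IsGradedIdeal Q) (hQ' : G.IsGradedPrime Q')
    (h : Q.comap G.toSubring.subtype ≤ Q'.comap G.toSubring.subtype) : Q ≤ Q' := by
  have even : ∀ x ∈ G.R0, x ∈ Q → x ∈ Q' := fun x hx hxQ =>
    h (show (⟨x, hx⟩ : G.toSubring) ∈ Q.comap G.toSubring.subtype from hxQ)
  have odd : ∀ x ∈ G.R1, x ∈ Q → x ∈ Q' := fun x hx hxQ =>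
    (hQ'.2.2 x (Or.inr hx) x (Or.inr hx)
      (even _ (G.mul_mem_11 hx hx) (Q.mul_mem_left x hxQ))).elim id id
  intro x hx
  obtain ⟨a, b, ha, hb, haQ, hbQ, rfl⟩ := hQ x hx
  exact Q'.add_mem (even a ha haQ) (odd b hb hbQ)

variable (G)

def contractGradedPrime : {Q : Ideal R // G.IsGradedPrime Q} ↪o PrimeSpectrum G.toSubring :=
  OrderEmbedding.ofMapLEIff
    (fun Q => ⟨Q.1.comap G.toSubring.subtype, isPrime_comap_of_isGradedPrime Q.2⟩)
    (fun Q Q' => ⟨le_of_comap_le_comap Q.2.1 Q'.2, fun h => Ideal.comap_mono h⟩)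

lemma contractGradedPrime_surjective : Function.Surjective G.contractGradedPrime :=
  fun p => ⟨⟨G.gradedExtension p.asIdeal, isGradedPrime_gradedExtension⟩,
    PrimeSpectrum.ext comap_gradedExtension⟩

end Z2Grading

/-- the homogeneous dimension of `R` (the supremum of lengths of chains of
`ℤ₂`-graded prime ideals) equals the Krull dimension of `R₀`. -/
theorem hdim_eq_dim {R : Type*} [CommRing R] (G : Z2Grading R) :
    Order.krullDim {Q : Ideal R // G.IsGradedPrime Q} = ringKrullDim G.toSubring :=
  Order.krullDim_eq_of_orderIso
    (OrderIso.ofSurjective G.contractGradedPrime G.contractGradedPrime_surjective)
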